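/- Let P = (a,b,c,d,e) be a quintuple of positive rationals, let (C₀,C₁,C₂) = φ(P), set m = C₀C₁C₂ − C₁² − C₂² and t = m − C₀² + 2. Regard P as a row vector in ℚ⁵. Then for every natural number n, the quintuple β^{3n}(P) equals the row vector P·L₁ⁿ and β^{−3n}(P) equals P·L₋₁ⁿ, where L₁ = (1/m)·the 5×5 matrix with rows (0,0,0,0,0), (0,0,0,0,0), (tC₂+C₀C₁−C₂, t(C₀C₂−C₁)+C₁, tm, m, 0), (−C₂, C₁−C₀C₂, −m, 0, 0), (C₁−C₀C₂, C₂+C₀C₁−C₀²C₂, −C₀m, 0, m), and L₋₁ = (1/m)·the 5×5 matrix with rows (0,0,0,0,0), (0,0,0,0,0), (C₂−C₀C₁, −C₁, 0, −m, 0), (t(C₀C₁−C₂)+C₂, tC₁+C₀C₂−C₁, m, tm, 0), (C₁+C₀C₂−C₀²C₁, C₂−C₀C₁, 0, −C₀m, m). -/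

import Mathlib

abbrev Q5 := ℚ × ℚ × ℚ × ℚ × ℚ

/-- α(a,b,c,d,e) = (b, (b²+cd)/a, c, d, e) -/
def actAlpha : Q5 → Q5
  | (a, b, c, d, e) => (b, (b ^ 2 + c * d) / a, c, d, e)

/-- β(a,b,c,d,e) = (b, c, (ac+be)/d, a, e) -/
def actBeta : Q5 → Q5
  | (a, b, c, d, e) => (b, c, (a * c + b * e) / d, a, e)

/-- α⁻¹(a,b,c,d,e) = ((a²+cd)/b, a, c, d, e) -/
def actAlphaInv : Q5 → Q5
  | (a, b, c, d, e) => ((a ^ 2 + c * d) / b, a, c, d, e)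

/-- β⁻¹(a,b,c,d,e) = (d, a, b, (ae+bd)/c, e) -/
def actBetaInv : Q5 → Q5
  | (a, b, c, d, e) => (d, a, b, (a * e + b * d) / c, e)

/-- Generators of the group G. -/
inductive Gen | A | B | Ainv | Binv

def Gen.app : Gen → Q5 → Q5
  | .A => actAlpha
  | .B => actBeta
  | .Ainv => actAlphaInv
  | .Binv => actBetaInv

/-- An element of G, given as a word in the generators, applied to a quintuple. -/
def applyWord (w : List Gen) (P : Q5) : Q5 := w.foldl (fun Q g => g.app Q) P

def Pos5 : Q5 → Prop
  | (a, b, c, d, e) => 0 < a ∧ 0 < b ∧ 0 < c ∧ 0 < d ∧ 0 < e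

/-- A quintuple viewed as a row vector in ℚ⁵. -/
def toVec : Q5 → (Fin 5 → ℚ)
  | (a, b, c, d, e) => ![a, b, c, d, e]

/-! The map β permutes the invariants cyclically, φ(βP) = (C₁, C₂, C₀), and β⁻¹ the other way,
so β³ and β⁻³ preserve each fibre of φ among positive quintuples. On the fibre over
(C₀, C₁, C₂) a direct computation shows that β³ and β⁻³ are linear, given by the matrices
L₁ and L₋₁, whose factor 1/m is harmless because m · (abcd)² is a polynomial with positive
coefficients. Iterating a map that acts on an invariant set as right multiplication by a fixed
matrix M yields right multiplication by Mⁿ. -/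

theorem apply_iterate_eq_vecMul_pow {α R ι : Type*} [Semiring R] [Fintype ι] [DecidableEq ι]
    {f : α → α} {s : Set α} (hs : Set.MapsTo f s s) (v : α → ι → R) (M : Matrix ι ι R)
    (hf : ∀ x ∈ s, v (f x) = Matrix.vecMul (v x) M) {x : α} (hx : x ∈ s) (n : ℕ) :
    v (f^[n] x) = Matrix.vecMul (v x) (M ^ n) := by
  induction n generalizing x with
  | zero => simp
  | succ n ih =>
    rw [Function.iterate_succ_apply, ih (hs hx), hf x hx, Matrix.vecMul_vecMul, pow_succ']

def phi : Q5 → ℚ × ℚ × ℚ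
  | (a, b, c, d, e) =>
    ((a ^ 2 + b ^ 2 + c * d) / (a * b),
     (c ^ 2 * d + a ^ 2 * c + b ^ 2 * d + a * b * e) / (b * c * d),
     (c * d ^ 2 + a ^ 2 * c + b ^ 2 * d + a * b * e) / (a * c * d))

theorem Pos5.actBeta {P : Q5} (hP : Pos5 P) : Pos5 (actBeta P) := by
  obtain ⟨a, b, c, d, e⟩ := P
  obtain ⟨ha, hb, hc, hd, he⟩ := hP
  exact ⟨hb, hc, by positivity, ha, he⟩

theorem Pos5.actBetaInv {P : Q5} (hP : Pos5 P) : Pos5 (actBetaInv P) := by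
  obtain ⟨a, b, c, d, e⟩ := P
  obtain ⟨ha, hb, hc, hd, he⟩ := hP
  exact ⟨hd, ha, hb, by positivity, he⟩

theorem phi_actBeta {P : Q5} (hP : Pos5 P) {C0 C1 C2 : ℚ} (hφ : phi P = (C0, C1, C2)) :
    phi (actBeta P) = (C1, C2, C0) := by
  obtain ⟨a, b, c, d, e⟩ := P
  obtain ⟨ha, hb, hc, hd, he⟩ := hP
  simp only [phi, Prod.mk.injEq] at hφ
  obtain ⟨rfl, rfl, rfl⟩ := hφ
  simp only [phi, actBeta, Prod.mk.injEq]
  refine ⟨?_, ?_, ?_⟩ <;> field_simp <;> ring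

theorem phi_actBetaInv {P : Q5} (hP : Pos5 P) {C0 C1 C2 : ℚ} (hφ : phi P = (C0, C1, C2)) :
    phi (actBetaInv P) = (C2, C0, C1) := by
  obtain ⟨a, b, c, d, e⟩ := P
  obtain ⟨ha, hb, hc, hd, he⟩ := hP
  simp only [phi, Prod.mk.injEq] at hφ
  obtain ⟨rfl, rfl, rfl⟩ := hφ
  simp only [phi, actBetaInv, Prod.mk.injEq]
  refine ⟨?_, ?_, ?_⟩ <;> field_simp <;> ring

theorem phi_prod_sub_sq_sub_sq_pos {P : Q5} (hP : Pos5 P) {C0 C1 C2 : ℚ}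
    (hφ : phi P = (C0, C1, C2)) : 0 < C0 * C1 * C2 - C1 ^ 2 - C2 ^ 2 := by
  obtain ⟨a, b, c, d, e⟩ := P
  obtain ⟨ha, hb, hc, hd, he⟩ := hP
  simp only [phi, Prod.mk.injEq] at hφ
  obtain ⟨hC0, hC1, hC2⟩ := hφ
  have hnum : (C0 * C1 * C2 - C1 ^ 2 - C2 ^ 2) * (a * b * c * d) ^ 2 =
      c ^ 4 * d ^ 4 + 2 * b ^ 2 * c ^ 3 * d ^ 3 + b ^ 4 * c ^ 2 * d ^ 2 + a * b * c ^ 2 * d ^ 3 * e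
      + a * b * c ^ 3 * d ^ 2 * e + a * b ^ 3 * c * d ^ 2 * e + a * b ^ 3 * c ^ 2 * d * e
      + 2 * a ^ 2 * c ^ 3 * d ^ 3 + a ^ 2 * b ^ 2 * c * d * e ^ 2 + a ^ 2 * b ^ 2 * c * d ^ 3
      + a ^ 2 * b ^ 2 * c ^ 3 * d + a ^ 3 * b * c * d ^ 2 * e + a ^ 3 * b * c ^ 2 * d * e
      + a ^ 4 * c ^ 2 * d ^ 2 := by
    rw [← hC0, ← hC1, ← hC2]; field_simp; ring
  refine pos_of_mul_pos_left ?_ (sq_nonneg (a * b * c * d))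
  rw [hnum]
  positivity

def betaCubeMatrix (C0 C1 C2 m t : ℚ) : Matrix (Fin 5) (Fin 5) ℚ :=
  m⁻¹ •
    !![0, 0, 0, 0, 0;
       0, 0, 0, 0, 0;
       t * C2 + C0 * C1 - C2, t * (C0 * C2 - C1) + C1, t * m, m, 0;
       -C2, C1 - C0 * C2, -m, 0, 0;
       C1 - C0 * C2, C2 + C0 * C1 - C0 ^ 2 * C2, -C0 * m, 0, m]

theorem toVec_actBeta_iterate_three {P : Q5} (hP : Pos5 P) {C0 C1 C2 m t : ℚ}
    (hφ : phi P = (C0, C1, C2)) (hm : m = C0 * C1 * C2 - C1 ^ 2 - C2 ^ 2)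
    (ht : t = m - C0 ^ 2 + 2) :
    toVec (actBeta^[3] P) = Matrix.vecMul (toVec P) (betaCubeMatrix C0 C1 C2 m t) := by
  have hm0 : m ≠ 0 := hm ▸ (phi_prod_sub_sq_sub_sq_pos hP hφ).ne'
  -- clear `m⁻¹` before unfolding `m`, so that `field_simp` only meets monomial denominators
  rw [betaCubeMatrix, Matrix.vecMul_smul, eq_inv_smul_iff₀ hm0]
  obtain ⟨a, b, c, d, e⟩ := P
  obtain ⟨ha, hb, hc, hd, he⟩ := hP
  simp only [phi, Prod.mk.injEq] at hφ
  obtain ⟨rfl, rfl, rfl⟩ := hφ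
  subst ht hm
  funext j
  fin_cases j <;>
    simp only [toVec, actBeta, Function.iterate_succ_apply, Function.iterate_zero_apply,
      Fin.zero_eta, Fin.mk_one, Fin.reduceFinMk, Fin.isValue, Pi.smul_apply, smul_eq_mul,
      Matrix.vecMul, dotProduct, Fin.sum_univ_five, Matrix.of_apply, Matrix.cons_val',
      Matrix.cons_val_fin_one, Matrix.cons_val, Matrix.cons_val_zero, Matrix.cons_val_one,
      mul_zero, add_zero, zero_add] <;>
    field_simp <;> ring

def betaInvCubeMatrix (C0 C1 C2 m t : ℚ) : Matrix (Fin 5) (Fin 5) ℚ :=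
  m⁻¹ •
    !![0, 0, 0, 0, 0;
       0, 0, 0, 0, 0;
       C2 - C0 * C1, -C1, 0, -m, 0;
       t * (C0 * C1 - C2) + C2, t * C1 + C0 * C2 - C1, m, t * m, 0;
       C1 + C0 * C2 - C0 ^ 2 * C1, C2 - C0 * C1, 0, -C0 * m, m]

theorem toVec_actBetaInv_iterate_three {P : Q5} (hP : Pos5 P) {C0 C1 C2 m t : ℚ}
    (hφ : phi P = (C0, C1, C2)) (hm : m = C0 * C1 * C2 - C1 ^ 2 - C2 ^ 2)
    (ht : t = m - C0 ^ 2 + 2) :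
    toVec (actBetaInv^[3] P) = Matrix.vecMul (toVec P) (betaInvCubeMatrix C0 C1 C2 m t) := by
  have hm0 : m ≠ 0 := hm ▸ (phi_prod_sub_sq_sub_sq_pos hP hφ).ne'
  rw [betaInvCubeMatrix, Matrix.vecMul_smul, eq_inv_smul_iff₀ hm0]
  obtain ⟨a, b, c, d, e⟩ := P
  obtain ⟨ha, hb, hc, hd, he⟩ := hP
  simp only [phi, Prod.mk.injEq] at hφ
  obtain ⟨rfl, rfl, rfl⟩ := hφ
  subst ht hm
  funext j
  fin_cases j <;>
    simp only [toVec, actBetaInv, Function.iterate_succ_apply, Function.iterate_zero_apply,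
      Fin.zero_eta, Fin.mk_one, Fin.reduceFinMk, Fin.isValue, Pi.smul_apply, smul_eq_mul,
      Matrix.vecMul, dotProduct, Fin.sum_univ_five, Matrix.of_apply, Matrix.cons_val',
      Matrix.cons_val_fin_one, Matrix.cons_val, Matrix.cons_val_zero, Matrix.cons_val_one,
      mul_zero, add_zero, zero_add] <;>
    field_simp <;> ring

theorem mapsTo_actBeta_iterate_three (C : ℚ × ℚ × ℚ) :
    Set.MapsTo actBeta^[3] {P | Pos5 P ∧ phi P = C} {P | Pos5 P ∧ phi P = C} := by
  rintro P ⟨hP, hφ⟩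
  obtain ⟨C0, C1, C2⟩ := C
  exact ⟨hP.actBeta.actBeta.actBeta,
    phi_actBeta hP.actBeta.actBeta (phi_actBeta hP.actBeta (phi_actBeta hP hφ))⟩

theorem mapsTo_actBetaInv_iterate_three (C : ℚ × ℚ × ℚ) :
    Set.MapsTo actBetaInv^[3] {P | Pos5 P ∧ phi P = C} {P | Pos5 P ∧ phi P = C} := by
  rintro P ⟨hP, hφ⟩
  obtain ⟨C0, C1, C2⟩ := C
  exact ⟨hP.actBetaInv.actBetaInv.actBetaInv,
    phi_actBetaInv hP.actBetaInv.actBetaInv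
      (phi_actBetaInv hP.actBetaInv (phi_actBetaInv hP hφ))⟩

/-- with (C₀,C₁,C₂) = φ(P), m = C₀C₁C₂ − C₁² − C₂², t = m − C₀² + 2, for every
natural number n we have β^{3n}(P) = P·L₁ⁿ and β^{−3n}(P) = P·L₋₁ⁿ as row vectors. -/
theorem beta_cubed_powers (a b c d e C0 C1 C2 m t : ℚ)
    (ha : 0 < a) (hb : 0 < b) (hc : 0 < c) (hd : 0 < d) (he : 0 < e)
    (hC0 : C0 = (a ^ 2 + b ^ 2 + c * d) / (a * b))
    (hC1 : C1 = (c ^ 2 * d + a ^ 2 * c + b ^ 2 * d + a * b * e) / (b * c * d))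
    (hC2 : C2 = (c * d ^ 2 + a ^ 2 * c + b ^ 2 * d + a * b * e) / (a * c * d))
    (hm : m = C0 * C1 * C2 - C1 ^ 2 - C2 ^ 2)
    (ht : t = m - C0 ^ 2 + 2)
    (L1 Lm1 : Matrix (Fin 5) (Fin 5) ℚ)
    (hL1 : L1 = m⁻¹ •
      !![0, 0, 0, 0, 0;
         0, 0, 0, 0, 0;
         t * C2 + C0 * C1 - C2, t * (C0 * C2 - C1) + C1, t * m, m, 0;
         -C2, C1 - C0 * C2, -m, 0, 0;
         C1 - C0 * C2, C2 + C0 * C1 - C0 ^ 2 * C2, -C0 * m, 0, m])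
    (hLm1 : Lm1 = m⁻¹ •
      !![0, 0, 0, 0, 0;
         0, 0, 0, 0, 0;
         C2 - C0 * C1, -C1, 0, -m, 0;
         t * (C0 * C1 - C2) + C2, t * C1 + C0 * C2 - C1, m, t * m, 0;
         C1 + C0 * C2 - C0 ^ 2 * C1, C2 - C0 * C1, 0, -C0 * m, m]) :
    ∀ n : ℕ,
      toVec (actBeta^[3 * n] (a, b, c, d, e)) =
        Matrix.vecMul (toVec (a, b, c, d, e)) (L1 ^ n) ∧
      toVec (actBetaInv^[3 * n] (a, b, c, d, e)) =
        Matrix.vecMul (toVec (a, b, c, d, e)) (Lm1 ^ n) := by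
  intro n
  have hmem : Pos5 (a, b, c, d, e) ∧ phi (a, b, c, d, e) = (C0, C1, C2) :=
    ⟨⟨ha, hb, hc, hd, he⟩, by rw [hC0, hC1, hC2]; rfl⟩
  rw [Function.iterate_mul, Function.iterate_mul]
  exact ⟨apply_iterate_eq_vecMul_pow (mapsTo_actBeta_iterate_three _) toVec L1
      (fun Q hQ => hL1 ▸ toVec_actBeta_iterate_three hQ.1 hQ.2 hm ht) hmem n,
    apply_iterate_eq_vecMul_pow (mapsTo_actBetaInv_iterate_three _) toVec Lm1
      (fun Q hQ => hLm1 ▸ toVec_actBetaInv_iterate_three hQ.1 hQ.2 hm ht) hmem n⟩
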